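/- For every integer d ≥ 1, setting c(d) = (−1)^d·b(d+1), there exists a polynomial q with real coefficients such that for every integer n ≥ 0, ∑_{k=0}^{n−1} (k^d − c(d))·(−1)^k·k! = q(n)·(−1)^n·n! − q(0). -/

import Mathlib

/-- The Bell numbers: `bell 0 = 1` and `bell (d+1) = ∑_{j=0}^{d} C(d,j) * bell j`. -/
def bell : ℕ → ℕ
  | 0 => 1
  | d + 1 => ∑ j ∈ (Finset.range (d + 1)).attach, Nat.choose d j.1 * bell j.1
  decreasing_by exact Finset.mem_range.mp j.2

/-!
With `T q (x) = (x + 1) q(x + 1) + q(x)` (`factorialDiff`), the term `T q (k) (-1)^k k!` equals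
`f k - f (k + 1)` for `f k = q(k) (-1)^k k!`, so it suffices to show `X^d - c(d) ∈ range T`.
Since `T (X^e)` is `X^(e+1)` plus lower terms, every polynomial is congruent to a constant modulo
`range T`, and the constant is read off by a linear functional `L` vanishing on `range T` with
`L 1 = 1` (`bellResidue`). Such an `L` comes from the umbral Bell functional `φ (X^n) = b(n)`
(`bellFunctional`): the Bell recurrence says exactly `φ (X p) = φ (p(X + 1))`, and applying this
twice shows that `L p = φ (X p(-X))` kills `range T`, while `L (X^d) = (-1)^d b(d+1)`.
-/

open Finset Polynomial

theorem bell_succ (n : ℕ) : bell (n + 1) = ∑ k ∈ range (n + 1), n.choose k * bell k := by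
  rw [bell]
  exact sum_attach (range (n + 1)) fun k ↦ n.choose k * bell k

theorem bell_one : bell 1 = 1 := by
  simp [bell_succ, bell]

section

variable (R : Type*) [CommRing R]

noncomputable def bellFunctional : R[X] →ₗ[R] R :=
  lsum fun n ↦ (bell n : R) • LinearMap.id

noncomputable def factorialDiff : R[X] →ₗ[R] R[X] where
  toFun q := (X + 1) * q.comp (X + 1) + q
  map_add' p q := by simp only [add_comp]; ring
  map_smul' a q := by simp only [smul_comp, smul_add, mul_smul_comm, RingHom.id_apply]

noncomputable def bellResidue : R[X] →ₗ[R] R :=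
  bellFunctional R ∘ₗ LinearMap.mulLeft R X ∘ₗ (aeval (-X : R[X])).toLinearMap

variable {R}

theorem bellFunctional_X_pow (n : ℕ) : bellFunctional R (X ^ n) = bell n := by
  simp [bellFunctional, ← monomial_one_right_eq_X_pow, sum_monomial_index]

theorem bellFunctional_X_add_one_pow (n : ℕ) :
    bellFunctional R ((X + 1) ^ n) = bell (n + 1) := by
  simp only [add_pow, one_pow, mul_one, map_sum, bell_succ, Nat.cast_sum, Nat.cast_mul]
  refine sum_congr rfl fun k _ ↦ ?_
  rw [mul_comm, ← nsmul_eq_mul, map_nsmul, bellFunctional_X_pow, nsmul_eq_mul]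

theorem bellFunctional_X_mul (p : R[X]) :
    bellFunctional R (X * p) = bellFunctional R (p.comp (X + 1)) := by
  induction p using Polynomial.induction_on' with
  | add p q hp hq => simp only [mul_add, add_comp, map_add, hp, hq]
  | monomial n a =>
    rw [← C_mul_X_pow_eq_monomial, mul_left_comm, ← pow_succ', mul_comp, C_comp, X_pow_comp,
      ← smul_eq_C_mul, ← smul_eq_C_mul, map_smul, map_smul, bellFunctional_X_pow,
      bellFunctional_X_add_one_pow]

theorem factorialDiff_apply (q : R[X]) :
    factorialDiff R q = (X + 1) * q.comp (X + 1) + q :=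
  rfl

theorem sum_eval_factorialDiff_mul (q : R[X]) (n : ℕ) :
    ∑ k ∈ range n, (factorialDiff R q).eval (k : R) * (-1) ^ k * k.factorial =
      q.eval 0 - q.eval (n : R) * (-1) ^ n * n.factorial := by
  set f : ℕ → R := fun k ↦ q.eval (k : R) * (-1) ^ k * k.factorial
  have hstep (k : ℕ) :
      (factorialDiff R q).eval (k : R) * (-1) ^ k * k.factorial = f k - f (k + 1) := by
    simp only [f, factorialDiff_apply, eval_add, eval_mul, eval_comp, eval_X, eval_one,
      Nat.factorial_succ]
    push_cast
    ring
  rw [sum_congr rfl fun k _ ↦ hstep k, sum_range_sub']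
  simp [f]

theorem bellResidue_apply (p : R[X]) :
    bellResidue R p = bellFunctional R (X * p.comp (-X)) :=
  rfl

theorem bellResidue_X_pow (n : ℕ) : bellResidue R (X ^ n) = (-1) ^ n * bell (n + 1) := by
  have : X * (X ^ n : R[X]).comp (-X) = (-1 : R) ^ n • X ^ (n + 1) := by
    rw [X_pow_comp, smul_eq_C_mul, neg_pow, C_pow, C_neg, C_1, pow_succ']
    ring
  rw [bellResidue_apply, this, map_smul, bellFunctional_X_pow, smul_eq_mul]

theorem bellResidue_one : bellResidue R 1 = 1 := by
  simpa [bell_one] using bellResidue_X_pow (R := R) 0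

theorem bellResidue_factorialDiff (q : R[X]) : bellResidue R (factorialDiff R q) = 0 := by
  have hshift := bellFunctional_X_mul (q.comp (-X))
  rw [comp_assoc, neg_comp, X_comp] at hshift
  rw [bellResidue_apply, bellFunctional_X_mul]
  simp only [factorialDiff_apply, add_comp, mul_comp, X_comp, one_comp, comp_assoc, neg_comp]
  rw [show (-(X + 1) + 1 : R[X]) = -X by ring, neg_mul, map_add, map_neg, hshift, neg_add_cancel]

theorem X_pow_mem_range_factorialDiff_sup_span_one (n : ℕ) :
    (X ^ n : R[X]) ∈ LinearMap.range (factorialDiff R) ⊔ Submodule.span R {1} := by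
  set M := LinearMap.range (factorialDiff R) ⊔ Submodule.span R {1}
  induction n using Nat.strong_induction_on with
  | _ n ih =>
    rcases n with _ | e
    · exact Submodule.mem_sup_right (Submodule.mem_span_singleton_self _)
    have himage : (X + 1) ^ (e + 1) + X ^ e ∈ M :=
      Submodule.mem_sup_left ⟨X ^ e, by rw [factorialDiff_apply, X_pow_comp, pow_succ']⟩
    have hlower : ∑ j ∈ range (e + 1), ((e + 1).choose j : R) • (X ^ j : R[X]) + X ^ e ∈ M :=
      M.add_mem (M.sum_mem fun j hj ↦ M.smul_mem _ (ih j (by simp at hj; omega)))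
        (ih e (by omega))
    convert M.sub_mem himage hlower using 1
    rw [add_pow, sum_range_succ]
    simp [Nat.cast_smul_eq_nsmul, nsmul_eq_mul, mul_comm]

theorem mem_range_factorialDiff_sup_span_one (p : R[X]) :
    p ∈ LinearMap.range (factorialDiff R) ⊔ Submodule.span R {1} := by
  induction p using Polynomial.induction_on' with
  | add p q hp hq => exact Submodule.add_mem _ hp hq
  | monomial n a =>
    rw [← C_mul_X_pow_eq_monomial, ← smul_eq_C_mul]
    exact Submodule.smul_mem _ a (X_pow_mem_range_factorialDiff_sup_span_one n)

theorem sub_C_bellResidue_mem_range_factorialDiff (p : R[X]) :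
    p - C (bellResidue R p) ∈ LinearMap.range (factorialDiff R) := by
  obtain ⟨t, ⟨q, rfl⟩, c, hc, rfl⟩ :=
    Submodule.mem_sup.mp (mem_range_factorialDiff_sup_span_one p)
  obtain ⟨a, rfl⟩ := Submodule.mem_span_singleton.mp hc
  refine ⟨q, ?_⟩
  rw [map_add, map_smul, bellResidue_factorialDiff, bellResidue_one, smul_eq_mul, mul_one,
    zero_add, smul_eq_C_mul, mul_one, add_sub_cancel_right]

end

theorem stmt_18 (d : ℕ) :
    ∃ q : Polynomial ℝ, ∀ n : ℕ,
      ∑ k ∈ Finset.range n,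
          (((k : ℝ) ^ d - (-1 : ℝ) ^ d * (bell (d + 1) : ℝ)) *
            (-1 : ℝ) ^ k * (Nat.factorial k : ℝ)) =
        q.eval (n : ℝ) * (-1 : ℝ) ^ n * (Nat.factorial n : ℝ) - q.eval 0 := by
  obtain ⟨q, hq⟩ := sub_C_bellResidue_mem_range_factorialDiff (X ^ d : ℝ[X])
  rw [bellResidue_X_pow] at hq
  refine ⟨-q, fun n ↦ ?_⟩
  have hterm (k : ℕ) :
      (k : ℝ) ^ d - (-1) ^ d * bell (d + 1) = (factorialDiff ℝ q).eval (k : ℝ) := by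
    simp [hq]
  simp only [hterm, sum_eval_factorialDiff_mul, eval_neg]
  ring
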